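/- Let f be a convex function (class C) and let A_2, A_3, A_4 be the coefficients of the inverse function. Then the symmetric Toeplitz determinant satisfies |T^s_{3,2}(f^{-1})| = |(A_2 - A_4)(A_2^2 - 2A_3^2 + A_2 A_4)| ≤ 4. -/

import Mathlib

open Complex Metric Set
open ComplexConjugate Filter Topology

/-!
For convex `f`, `p = 1 + z f''/f'` has positive real part, so its Cayley transform
`(p - 1) / (p + 1) = z φ(z)`, with `φ = f'' / (2 f' + z f'')`, maps the disc into itself and
vanishes at `0`; by the Schwarz lemma `φ` maps the disc into the closed disc. Writing
`φ = c₀ + c₁ z + c₂ z² + ⋯`, comparing Taylor coefficients in `f'' = φ (2 f' + z f'')`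
expresses `A₂, A₃, A₄` polynomially in `c₀, c₁, c₂`. The classical bounds
`|c₁|, |c₂| ≤ 1 - |c₀|²` (Schwarz lemma after the Möbius normalisation `c₀ ↦ 0`) and the
triangle inequality reduce the claim to a polynomial inequality in `|c₀| ∈ [0, 1]`, with
equality at `|c₀| = 1`.
-/

lemma normSq_one_sub_conj_mul_sub_normSq_sub (u v : ℂ) :
    normSq (1 - conj v * u) - normSq (u - v) = (1 - normSq u) * (1 - normSq v) := by
  simp only [normSq_apply, sub_re, sub_im, mul_re, mul_im, one_re, one_im, conj_re, conj_im]
  ring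

lemma norm_sub_le_norm_one_sub_conj_mul {u v : ℂ} (hu : ‖u‖ ≤ 1) (hv : ‖v‖ ≤ 1) :
    ‖u - v‖ ≤ ‖1 - conj v * u‖ := by
  have hu' : normSq u ≤ 1 := by rw [← Complex.sq_norm]; nlinarith [norm_nonneg u]
  have hv' : normSq v ≤ 1 := by rw [← Complex.sq_norm]; nlinarith [norm_nonneg v]
  rw [← sq_le_sq₀ (norm_nonneg _) (norm_nonneg _), Complex.sq_norm, Complex.sq_norm]
  nlinarith [normSq_one_sub_conj_mul_sub_normSq_sub u v]

lemma one_sub_conj_mul_ne_zero {u v : ℂ} (hu : ‖u‖ ≤ 1) (hv : ‖v‖ < 1) :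
    1 - conj v * u ≠ 0 := by
  have : ‖conj v * u‖ < 1 := by
    rw [norm_mul, RCLike.norm_conj]
    nlinarith [norm_nonneg u, norm_nonneg v]
  intro h
  rw [← sub_eq_zero.mp h, norm_one] at this
  exact this.false

lemma norm_one_sub_conj_mul_self {c : ℂ} (hc : ‖c‖ ≤ 1) :
    ‖1 - conj c * c‖ = 1 - ‖c‖ ^ 2 := by
  rw [Complex.conj_mul', ← ofReal_pow, ← ofReal_one, ← ofReal_sub, norm_real,
    Real.norm_eq_abs, abs_of_nonneg (by nlinarith [norm_nonneg c])]

lemma add_one_ne_zero_of_re_pos {q : ℂ} (hq : 0 < q.re) : q + 1 ≠ 0 :=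
  ne_of_apply_ne re (by simp only [add_re, one_re, zero_re]; linarith)

lemma norm_sub_one_div_add_one_lt_one {q : ℂ} (hq : 0 < q.re) : ‖(q - 1) / (q + 1)‖ < 1 := by
  have hq1 := add_one_ne_zero_of_re_pos hq
  rw [norm_div, div_lt_one (norm_pos_iff.2 hq1), ← sq_lt_sq₀ (norm_nonneg _) (norm_nonneg _),
    Complex.sq_norm, Complex.sq_norm]
  simp only [normSq_apply, add_re, add_im, sub_re, sub_im, one_re, one_im]
  nlinarith

lemma dslope_fun_id_mul {𝕜 : Type*} [NontriviallyNormedField 𝕜] {φ : 𝕜 → 𝕜}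
    (hφ : DifferentiableAt 𝕜 φ 0) : dslope (fun z => z * φ z) 0 = φ := by
  funext z
  rcases eq_or_ne z 0 with rfl | hz
  · rw [dslope_same, deriv_fun_mul differentiableAt_fun_id hφ]
    simp
  · simpa using eqOn_dslope_sub_smul φ 0 hz

lemma iteratedDeriv_succ_fun_id_mul {𝕜 : Type*} [NontriviallyNormedField 𝕜] {H : 𝕜 → 𝕜}
    {n : ℕ} (hH : ContDiffAt 𝕜 (n + 1) H 0) :
    iteratedDeriv (n + 1) (fun z => z * H z) 0 = (n + 1) * iteratedDeriv n H 0 := by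
  rw [iteratedDeriv_fun_mul contDiffAt_fun_id (by exact_mod_cast hH), Finset.sum_range_succ',
    Finset.sum_range_succ']
  simp [iteratedDeriv_fun_id_zero]

lemma deriv_eq_and_iteratedDeriv_two_eq_of_eventuallyEq {g h : ℂ → ℂ} {c : ℂ}
    (hg : AnalyticAt ℂ g 0) (hh : AnalyticAt ℂ h 0)
    (hgh : g =ᶠ[𝓝 0] fun z => c + z * (h z * (1 - conj c * g z))) :
    deriv g 0 = h 0 * (1 - conj c * g 0) ∧
      iteratedDeriv 2 g 0 = 2 * (deriv h 0 * (1 - conj c * g 0) - h 0 * conj c * deriv g 0) := by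
  have hk : AnalyticAt ℂ (fun z => 1 - conj c * g z) 0 :=
    analyticAt_const.sub (analyticAt_const.mul hg)
  have hH : AnalyticAt ℂ (fun z => h z * (1 - conj c * g z)) 0 := hh.mul hk
  constructor
  · have h₁ := iteratedDeriv_succ_fun_id_mul (n := 0) hH.contDiffAt
    rw [← iteratedDeriv_one, hgh.iteratedDeriv_eq, iteratedDeriv_const_add one_pos]
    simpa using h₁
  · have h₂ := iteratedDeriv_succ_fun_id_mul (n := 1) hH.contDiffAt
    simp only [Nat.cast_one, one_add_one_eq_two, iteratedDeriv_one] at h₂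
    rw [hgh.iteratedDeriv_eq, iteratedDeriv_const_add two_pos, h₂,
      deriv_fun_mul hh.differentiableAt hk.differentiableAt, deriv_const_sub,
      deriv_const_mul _ hg.differentiableAt]
    ring

section BoundedOnDisc

variable {g : ℂ → ℂ}

lemma iteratedDeriv_eq_zero_of_norm_eq_one (hg : DifferentiableOn ℂ g (ball 0 1))
    (hmaps : MapsTo g (ball 0 1) (closedBall 0 1)) (h1 : ‖g 0‖ = 1) {n : ℕ} (hn : n ≠ 0) :
    iteratedDeriv n g 0 = 0 := by
  have hmax : IsMaxOn (norm ∘ g) (ball 0 1) 0 := fun z hz => by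
    simpa [h1] using hmaps hz
  have hconst := eqOn_of_isPreconnected_of_isMaxOn_norm (convex_ball (0 : ℂ) 1).isPreconnected
    isOpen_ball hg (mem_ball_self one_pos) hmax
  have hev : g =ᶠ[𝓝 0] fun _ => g 0 :=
    eventually_of_mem (isOpen_ball.mem_nhds (mem_ball_self one_pos)) hconst
  rw [hev.iteratedDeriv_eq, iteratedDeriv_const, if_neg hn]

/-- The Möbius map `w ↦ (w - g 0) / (1 - conj (g 0) * w)` moves `g 0` to the origin; dividing
the result by `z` (Schwarz lemma) gives the self-map `h` of the closed disc. -/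
lemma exists_eqOn_const_add_mul_mul_one_sub_conj_mul (hg : DifferentiableOn ℂ g (ball 0 1))
    (hmaps : MapsTo g (ball 0 1) (closedBall 0 1)) (hc : ‖g 0‖ < 1) :
    ∃ h : ℂ → ℂ, DifferentiableOn ℂ h (ball 0 1) ∧ MapsTo h (ball 0 1) (closedBall 0 1) ∧
      EqOn g (fun z => g 0 + z * (h z * (1 - conj (g 0) * g z))) (ball 0 1) := by
  set c := g 0
  have hg1 : ∀ z ∈ ball (0 : ℂ) 1, ‖g z‖ ≤ 1 := fun z hz => by simpa using hmaps hz
  have hden : ∀ z ∈ ball (0 : ℂ) 1, 1 - conj c * g z ≠ 0 := fun z hz =>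
    one_sub_conj_mul_ne_zero (hg1 z hz) hc
  set ψ := fun z => (g z - c) / (1 - conj c * g z)
  have hψd : DifferentiableOn ℂ ψ (ball 0 1) :=
    (hg.sub_const c).div ((differentiableOn_const 1).sub (hg.const_mul _)) hden
  have hψ0 : ψ 0 = 0 := by simp [ψ, c]
  have hψmaps : MapsTo ψ (ball 0 1) (closedBall (ψ 0) 1) := fun z hz => by
    rw [hψ0, mem_closedBall_zero_iff, norm_div]
    exact div_le_one_of_le₀ (norm_sub_le_norm_one_sub_conj_mul (hg1 z hz) hc.le) (norm_nonneg _)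
  refine ⟨dslope ψ 0,
    (differentiableOn_dslope (isOpen_ball.mem_nhds (mem_ball_self one_pos))).2 hψd,
    fun z hz => ?_, fun z hz => ?_⟩
  · simpa using norm_dslope_le_div_of_mapsTo_ball hψd hψmaps hz
  · have hψz : z * dslope ψ 0 z = ψ z := by simpa [hψ0] using sub_smul_dslope ψ 0 z
    simp only [← mul_assoc, hψz, ψ, div_mul_cancel₀ _ (hden z hz)]
    ring

lemma exists_mapsTo_closedBall_deriv_eq (hg : DifferentiableOn ℂ g (ball 0 1))
    (hmaps : MapsTo g (ball 0 1) (closedBall 0 1)) (hc : ‖g 0‖ < 1) :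
    ∃ h : ℂ → ℂ, DifferentiableOn ℂ h (ball 0 1) ∧ MapsTo h (ball 0 1) (closedBall 0 1) ∧
      deriv g 0 = h 0 * (1 - conj (g 0) * g 0) ∧
      iteratedDeriv 2 g 0 =
        2 * (deriv h 0 * (1 - conj (g 0) * g 0) - h 0 * conj (g 0) * deriv g 0) := by
  have h0 : (0 : ℂ) ∈ ball (0 : ℂ) 1 := mem_ball_self one_pos
  obtain ⟨h, hhd, hhmaps, hgh⟩ := exists_eqOn_const_add_mul_mul_one_sub_conj_mul hg hmaps hc
  exact ⟨h, hhd, hhmaps, deriv_eq_and_iteratedDeriv_two_eq_of_eventuallyEq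
    (hg.analyticOnNhd isOpen_ball 0 h0) (hhd.analyticOnNhd isOpen_ball 0 h0)
    (eventually_of_mem (isOpen_ball.mem_nhds h0) hgh)⟩

theorem norm_deriv_le_one_sub_sq (hg : DifferentiableOn ℂ g (ball 0 1))
    (hmaps : MapsTo g (ball 0 1) (closedBall 0 1)) : ‖deriv g 0‖ ≤ 1 - ‖g 0‖ ^ 2 := by
  have h0 : (0 : ℂ) ∈ ball (0 : ℂ) 1 := mem_ball_self one_pos
  have hg1 : ‖g 0‖ ≤ 1 := by simpa using hmaps h0
  rcases hg1.eq_or_lt with h1 | h1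
  · rw [← iteratedDeriv_one, iteratedDeriv_eq_zero_of_norm_eq_one hg hmaps h1 one_ne_zero, h1]
    norm_num
  obtain ⟨h, -, hhmaps, hderiv, -⟩ := exists_mapsTo_closedBall_deriv_eq hg hmaps h1
  rw [hderiv, norm_mul, norm_one_sub_conj_mul_self hg1]
  exact mul_le_of_le_one_left (by nlinarith [norm_nonneg (g 0)]) (by simpa using hhmaps h0)

theorem norm_iteratedDeriv_two_le (hg : DifferentiableOn ℂ g (ball 0 1))
    (hmaps : MapsTo g (ball 0 1) (closedBall 0 1)) :
    ‖iteratedDeriv 2 g 0‖ ≤ 2 * (1 - ‖g 0‖ ^ 2) := by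
  have h0 : (0 : ℂ) ∈ ball (0 : ℂ) 1 := mem_ball_self one_pos
  have hg1 : ‖g 0‖ ≤ 1 := by simpa using hmaps h0
  rcases hg1.eq_or_lt with h1 | h1
  · rw [iteratedDeriv_eq_zero_of_norm_eq_one hg hmaps h1 two_ne_zero, h1]
    norm_num
  obtain ⟨h, hhd, hhmaps, hderiv, hsecond⟩ := exists_mapsTo_closedBall_deriv_eq hg hmaps h1
  set x := ‖g 0‖
  set u := ‖h 0‖
  have hx2 : 0 ≤ 1 - x ^ 2 := by nlinarith [norm_nonneg (g 0)]
  have hh₁ := norm_deriv_le_one_sub_sq hhd hhmaps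
  have hg' : ‖deriv g 0‖ = u * (1 - x ^ 2) := by
    rw [hderiv, norm_mul, norm_one_sub_conj_mul_self hg1]
  calc ‖iteratedDeriv 2 g 0‖
      ≤ 2 * (‖deriv h 0‖ * (1 - x ^ 2) + u * x * (u * (1 - x ^ 2))) := by
        rw [hsecond, norm_mul, Complex.norm_two]
        gcongr
        refine (norm_sub_le _ _).trans_eq ?_
        rw [norm_mul, norm_mul, norm_mul, RCLike.norm_conj, hg', norm_one_sub_conj_mul_self hg1]
    _ ≤ 2 * ((1 - u ^ 2) * (1 - x ^ 2) + u * x * (u * (1 - x ^ 2))) := by gcongr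
    _ ≤ 2 * (1 - x ^ 2) := by
        nlinarith [mul_nonneg (mul_nonneg (sq_nonneg u) hx2) (sub_nonneg.2 hg1)]

end BoundedOnDisc

/-- `z * convexSchwarzQuotient f z` is the Cayley transform `(p - 1) / (p + 1)` of
`p = 1 + z f'' / f'`; for convex `f` it is a Schwarz function. -/
noncomputable def convexSchwarzQuotient (f : ℂ → ℂ) (z : ℂ) : ℂ :=
  iteratedDeriv 2 f z / (2 * deriv f z + z * iteratedDeriv 2 f z)

section ConvexSchwarzQuotient

variable {f : ℂ → ℂ} {z : ℂ}

lemma two_mul_deriv_add_mul_ne_zero (hz : deriv f z ≠ 0)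
    (hcv : 0 < (1 + z * iteratedDeriv 2 f z / deriv f z).re) :
    2 * deriv f z + z * iteratedDeriv 2 f z ≠ 0 := by
  have hq := add_one_ne_zero_of_re_pos hcv
  have : 2 * deriv f z + z * iteratedDeriv 2 f z =
      deriv f z * (1 + z * iteratedDeriv 2 f z / deriv f z + 1) := by
    field_simp
    ring
  rw [this]
  exact mul_ne_zero hz hq

lemma mul_convexSchwarzQuotient (hz : deriv f z ≠ 0) :
    z * convexSchwarzQuotient f z =
      (1 + z * iteratedDeriv 2 f z / deriv f z - 1) /
        (1 + z * iteratedDeriv 2 f z / deriv f z + 1) := by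
  have hq : 1 + z * iteratedDeriv 2 f z / deriv f z + 1 =
      (2 * deriv f z + z * iteratedDeriv 2 f z) / deriv f z := by
    field_simp
    ring
  rw [add_sub_cancel_left, hq, div_div_div_cancel_right₀ hz, convexSchwarzQuotient,
    mul_div_assoc]

lemma differentiableOn_convexSchwarzQuotient (hf : AnalyticOnNhd ℂ f (ball 0 1))
    (hne : ∀ z ∈ ball (0 : ℂ) 1, deriv f z ≠ 0)
    (hcv : ∀ z ∈ ball (0 : ℂ) 1, 0 < (1 + z * iteratedDeriv 2 f z / deriv f z).re) :
    DifferentiableOn ℂ (convexSchwarzQuotient f) (ball 0 1) := by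
  have hf2 : AnalyticOnNhd ℂ (iteratedDeriv 2 f) (ball 0 1) := by
    rw [iteratedDeriv_eq_iterate]
    exact hf.iterated_deriv 2
  exact (hf2.div ((analyticOnNhd_const.mul hf.deriv).add (analyticOnNhd_id.mul hf2))
    fun z hz => two_mul_deriv_add_mul_ne_zero (hne z hz) (hcv z hz)).differentiableOn

lemma mapsTo_convexSchwarzQuotient (hf : AnalyticOnNhd ℂ f (ball 0 1))
    (hne : ∀ z ∈ ball (0 : ℂ) 1, deriv f z ≠ 0)
    (hcv : ∀ z ∈ ball (0 : ℂ) 1, 0 < (1 + z * iteratedDeriv 2 f z / deriv f z).re) :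
    MapsTo (convexSchwarzQuotient f) (ball 0 1) (closedBall 0 1) := by
  have hφ := differentiableOn_convexSchwarzQuotient hf hne hcv
  have hω : DifferentiableOn ℂ (fun z => z * convexSchwarzQuotient f z) (ball 0 1) := by fun_prop
  have hωmaps : MapsTo (fun z => z * convexSchwarzQuotient f z) (ball 0 1) (closedBall 0 1) :=
    fun z hz => by
      simpa [mul_convexSchwarzQuotient (hne z hz)] using
        (norm_sub_one_div_add_one_lt_one (hcv z hz)).le
  intro z hz
  have := norm_dslope_le_div_of_mapsTo_ball hω (by simpa using hωmaps) hz
  rwa [dslope_fun_id_mul (hφ.differentiableAt (isOpen_ball.mem_nhds (mem_ball_self one_pos))),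
    div_one, ← mem_closedBall_zero_iff] at this

end ConvexSchwarzQuotient

section Taylor

variable {f : ℂ → ℂ}

lemma analyticAt_iteratedDeriv_two (hf : AnalyticAt ℂ f 0) :
    AnalyticAt ℂ (iteratedDeriv 2 f) 0 := by
  rw [iteratedDeriv_eq_iterate]
  exact hf.iterated_deriv 2

lemma iteratedDeriv_two_mul_deriv_add_mul (hf : AnalyticAt ℂ f 0) (j : ℕ) :
    iteratedDeriv j (fun z => 2 * deriv f z + z * iteratedDeriv 2 f z) 0 =
      (j + 2) * iteratedDeriv (j + 1) f 0 := by
  have h₁ : AnalyticAt ℂ (deriv f) 0 := hf.deriv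
  have h₂ := analyticAt_iteratedDeriv_two hf
  have h₁' : AnalyticAt ℂ (fun z => 2 * deriv f z) 0 := analyticAt_const.mul h₁
  have h₃ : AnalyticAt ℂ (fun z => z * iteratedDeriv 2 f z) 0 := analyticAt_id.mul h₂
  rw [iteratedDeriv_fun_add h₁'.contDiffAt h₃.contDiffAt,
    iteratedDeriv_const_mul _ h₁.contDiffAt, ← iteratedDeriv_succ']
  rcases j with _ | j
  · simp
  · rw [iteratedDeriv_succ_fun_id_mul h₂.contDiffAt, iteratedDeriv_eq_iterate,
      iteratedDeriv_eq_iterate, iteratedDeriv_eq_iterate, ← Function.iterate_add_apply]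
    push_cast
    ring

/-- Leibniz's rule applied to `f'' = φ · (2 f' + z f'')`, where `φ = convexSchwarzQuotient f`. -/
lemma iteratedDeriv_add_two_eq_sum (hf : AnalyticAt ℂ f 0) (hf1 : deriv f 0 = 1) (k : ℕ) :
    iteratedDeriv (k + 2) f 0 = ∑ i ∈ Finset.range (k + 1), k.choose i *
      iteratedDeriv i (convexSchwarzQuotient f) 0 *
        ((↑(k - i) + 2) * iteratedDeriv (k - i + 1) f 0) := by
  have h₂ := analyticAt_iteratedDeriv_two hf
  have hD : AnalyticAt ℂ (fun z => 2 * deriv f z + z * iteratedDeriv 2 f z) 0 :=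
    (analyticAt_const.mul hf.deriv).add (analyticAt_id.mul h₂)
  have hD0 : 2 * deriv f 0 + 0 * iteratedDeriv 2 f 0 ≠ 0 := by simp [hf1]
  have hφ : AnalyticAt ℂ (convexSchwarzQuotient f) 0 := h₂.div hD hD0
  have hev : (fun z => convexSchwarzQuotient f z * (2 * deriv f z + z * iteratedDeriv 2 f z))
      =ᶠ[𝓝 0] iteratedDeriv 2 f := by
    filter_upwards [hD.continuousAt.eventually_ne hD0] with z hz
    exact div_mul_cancel₀ _ hz
  rw [iteratedDeriv_eq_iterate, Function.iterate_add_apply, ← iteratedDeriv_eq_iterate,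
    ← iteratedDeriv_eq_iterate, ← hev.iteratedDeriv_eq,
    iteratedDeriv_fun_mul hφ.contDiffAt hD.contDiffAt]
  simp only [iteratedDeriv_two_mul_deriv_add_mul hf]

lemma iteratedDeriv_eq_convexSchwarzQuotient (hf : AnalyticAt ℂ f 0) (hf1 : deriv f 0 = 1) :
    iteratedDeriv 2 f 0 = 2 * convexSchwarzQuotient f 0 ∧
    iteratedDeriv 3 f 0 = 2 * deriv (convexSchwarzQuotient f) 0 +
      3 * iteratedDeriv 2 f 0 * convexSchwarzQuotient f 0 ∧
    iteratedDeriv 4 f 0 = 2 * iteratedDeriv 2 (convexSchwarzQuotient f) 0 +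
      6 * iteratedDeriv 2 f 0 * deriv (convexSchwarzQuotient f) 0 +
      4 * iteratedDeriv 3 f 0 * convexSchwarzQuotient f 0 := by
  refine ⟨?_, ?_, ?_⟩
  · simpa [hf1, mul_comm] using iteratedDeriv_add_two_eq_sum hf hf1 0
  · have := iteratedDeriv_add_two_eq_sum hf hf1 1
    simp only [Nat.reduceAdd, Finset.sum_range_succ, Finset.range_one, Finset.sum_singleton,
      Nat.choose_succ_self_right, zero_add, Nat.cast_one, iteratedDeriv_zero, one_mul, tsub_zero,
      Nat.choose_self, iteratedDeriv_one, tsub_self, CharP.cast_eq_zero, hf1, mul_one] at this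
    linear_combination this
  · have := iteratedDeriv_add_two_eq_sum hf hf1 2
    simp only [Nat.reduceAdd, Finset.sum_range_succ, Finset.range_one, Finset.sum_singleton,
      Nat.choose_zero_right, Nat.cast_one, iteratedDeriv_zero, one_mul, tsub_zero, Nat.cast_ofNat,
      Nat.choose_succ_self_right, iteratedDeriv_one, Nat.add_one_sub_one, Nat.choose_self,
      tsub_self, CharP.cast_eq_zero, zero_add, hf1, mul_one] at this
    linear_combination this

end Taylor

lemma mul_le_four_of_le_one_sub_sq {x y t : ℝ} (hx0 : 0 ≤ x) (hx1 : x ≤ 1) (hy0 : 0 ≤ y)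
    (hy : y ≤ 1 - x ^ 2) (ht0 : 0 ≤ t) (ht : t ≤ 2 * (1 - x ^ 2)) :
    (x + t / 12 + 5 / 6 * x * y + x ^ 3) *
      (x ^ 2 + x * t / 12 + x ^ 2 * y / 2 + x ^ 4 + 2 / 9 * y ^ 2) ≤ 4 := by
  have hs : 0 ≤ 1 - x ^ 2 := hy0.trans hy
  calc (x + t / 12 + 5 / 6 * x * y + x ^ 3) *
        (x ^ 2 + x * t / 12 + x ^ 2 * y / 2 + x ^ 4 + 2 / 9 * y ^ 2)
      ≤ (x + 2 * (1 - x ^ 2) / 12 + 5 / 6 * x * (1 - x ^ 2) + x ^ 3) *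
        (x ^ 2 + x * (2 * (1 - x ^ 2)) / 12 + x ^ 2 * (1 - x ^ 2) / 2 + x ^ 4 +
          2 / 9 * (1 - x ^ 2) ^ 2) := by
        gcongr
    _ ≤ 4 := by
        nlinarith [sq_nonneg x, sq_nonneg (1 - x), pow_le_one₀ hx0 hx1 (n := 5),
          pow_le_one₀ hx0 hx1 (n := 6), pow_le_one₀ hx0 hx1 (n := 7), mul_nonneg hx0 hx0]

lemma norm_mul_le_four_of_norm_le {c₀ c₁ c₂ : ℂ} (h₀ : ‖c₀‖ ≤ 1) (h₁ : ‖c₁‖ ≤ 1 - ‖c₀‖ ^ 2)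
    (h₂ : ‖c₂‖ ≤ 2 * (1 - ‖c₀‖ ^ 2)) :
    ‖(-c₀ + c₂ / 12 - 5 / 6 * c₀ * c₁ + c₀ ^ 3) *
      (c₀ ^ 2 + c₀ * c₂ / 12 + c₀ ^ 2 * c₁ / 2 - c₀ ^ 4 - 2 / 9 * c₁ ^ 2)‖ ≤ 4 := by
  have b₁ : ‖-c₀ + c₂ / 12 - 5 / 6 * c₀ * c₁ + c₀ ^ 3‖ ≤
      ‖c₀‖ + ‖c₂‖ / 12 + 5 / 6 * ‖c₀‖ * ‖c₁‖ + ‖c₀‖ ^ 3 := by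
    refine norm_add_le_of_le (norm_sub_le_of_le (norm_add_le_of_le ?_ ?_) ?_) ?_ <;>
      simp [norm_pow]
  have b₂ : ‖c₀ ^ 2 + c₀ * c₂ / 12 + c₀ ^ 2 * c₁ / 2 - c₀ ^ 4 - 2 / 9 * c₁ ^ 2‖ ≤
      ‖c₀‖ ^ 2 + ‖c₀‖ * ‖c₂‖ / 12 + ‖c₀‖ ^ 2 * ‖c₁‖ / 2 + ‖c₀‖ ^ 4 + 2 / 9 * ‖c₁‖ ^ 2 := by
    refine norm_sub_le_of_le
      (norm_sub_le_of_le (norm_add_le_of_le (norm_add_le_of_le ?_ ?_) ?_) ?_) ?_ <;>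
      simp [norm_pow]
  rw [norm_mul]
  exact (mul_le_mul b₁ b₂ (norm_nonneg _) (by positivity)).trans
    (mul_le_four_of_le_one_sub_sq (norm_nonneg _) h₀ (norm_nonneg _) h₁ (norm_nonneg _) h₂)

theorem symToeplitz32_convex_general (f : ℂ → ℂ)
    (hf : AnalyticOnNhd ℂ f (ball (0:ℂ) 1))
    (hf1 : deriv f 0 = 1)
    (hne : ∀ z ∈ ball (0:ℂ) 1, deriv f z ≠ 0)
    (hcv : ∀ z ∈ ball (0:ℂ) 1, 0 < (1 + z * iteratedDeriv 2 f z / deriv f z).re)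
    (a₂ a₃ a₄ A₂ A₃ A₄ : ℂ)
    (ha₂ : a₂ = iteratedDeriv 2 f 0 / 2)
    (ha₃ : a₃ = iteratedDeriv 3 f 0 / 6)
    (ha₄ : a₄ = iteratedDeriv 4 f 0 / 24)
    (hA₂ : A₂ = -a₂)
    (hA₃ : A₃ = 2 * a₂ ^ 2 - a₃)
    (hA₄ : A₄ = -a₄ + 5 * a₂ * a₃ - 5 * a₂ ^ 3) :
    ‖(A₂ - A₄) * (A₂ ^ 2 - 2 * A₃ ^ 2 + A₂ * A₄)‖ ≤ 4 := by
  set φ := convexSchwarzQuotient f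
  have h₀ : (0 : ℂ) ∈ ball (0 : ℂ) 1 := mem_ball_self one_pos
  have hφd := differentiableOn_convexSchwarzQuotient hf hne hcv
  have hφmaps := mapsTo_convexSchwarzQuotient hf hne hcv
  obtain ⟨e₂, e₃, e₄⟩ := iteratedDeriv_eq_convexSchwarzQuotient (hf 0 h₀) hf1
  have key : (A₂ - A₄) * (A₂ ^ 2 - 2 * A₃ ^ 2 + A₂ * A₄) =
      (-φ 0 + iteratedDeriv 2 φ 0 / 12 - 5 / 6 * φ 0 * deriv φ 0 + φ 0 ^ 3) *
      (φ 0 ^ 2 + φ 0 * iteratedDeriv 2 φ 0 / 12 + φ 0 ^ 2 * deriv φ 0 / 2 - φ 0 ^ 4 -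
        2 / 9 * deriv φ 0 ^ 2) := by
    rw [hA₂, hA₃, hA₄, ha₂, ha₃, ha₄, e₄, e₃, e₂]
    ring
  rw [key]
  exact norm_mul_le_four_of_norm_le (by simpa using hφmaps h₀)
    (norm_deriv_le_one_sub_sq hφd hφmaps) (norm_iteratedDeriv_two_le hφd hφmaps)

theorem symToeplitz32_convex (f : ℂ → ℂ)
    (hf : AnalyticOnNhd ℂ f (ball (0:ℂ) 1))
    (hf0 : f 0 = 0) (hf1 : deriv f 0 = 1)
    (hne : ∀ z ∈ ball (0:ℂ) 1, deriv f z ≠ 0)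
    (hcv : ∀ z ∈ ball (0:ℂ) 1, 0 < (1 + z * iteratedDeriv 2 f z / deriv f z).re)
    (a₂ a₃ a₄ A₂ A₃ A₄ : ℂ)
    (ha₂ : a₂ = iteratedDeriv 2 f 0 / 2)
    (ha₃ : a₃ = iteratedDeriv 3 f 0 / 6)
    (ha₄ : a₄ = iteratedDeriv 4 f 0 / 24)
    (hA₂ : A₂ = -a₂)
    (hA₃ : A₃ = 2 * a₂ ^ 2 - a₃)
    (hA₄ : A₄ = -a₄ + 5 * a₂ * a₃ - 5 * a₂ ^ 3) :
    ‖(A₂ - A₄) * (A₂ ^ 2 - 2 * A₃ ^ 2 + A₂ * A₄)‖ ≤ 4 :=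
  symToeplitz32_convex_general f hf hf1 hne hcv a₂ a₃ a₄ A₂ A₃ A₄ ha₂ ha₃ ha₄ hA₂ hA₃ hA₄
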